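/- Let n = 2h be even with h ≥ 1, and let M be the square matrix over ℚ whose rows and columns are indexed by Σ^h, with entry M(u, v) = 1 if the concatenation u·v ∈ Σ^n is a Motzkin path and M(u, v) = 0 otherwise. Then the rank of M equals h + 1 = 1 + n/2. (This is the Schmidt rank of the Motzkin state across the middle cut.) -/

import Mathlib

/-- The three-letter alphabet `Σ = {0, l, r}` (named `Tri` to avoid a clash with Mathlib). -/
inductive Tri : Type
  | zero : Tri
  | left : Tri
  | right : Tri
  deriving DecidableEq

instance : Fintype Tri :=
  ⟨{Tri.zero, Tri.left, Tri.right}, fun x => by cases x <;> simp⟩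

/-- A string is a Motzkin path iff every prefix contains at least as many `l`'s as
`r`'s and the total number of `l`'s equals the total number of `r`'s. -/
def IsMotzkin (s : List Tri) : Prop :=
  (∀ j : ℕ, (s.take j).count Tri.right ≤ (s.take j).count Tri.left) ∧
    s.count Tri.left = s.count Tri.right

def VP (s : List Tri) : Prop :=
  ∀ j : ℕ, (s.take j).count Tri.right ≤ (s.take j).count Tri.left

def VS (s : List Tri) : Prop :=
  ∀ j : ℕ, (s.drop j).count Tri.left ≤ (s.drop j).count Tri.right

lemma cnt_split (c : Tri) (s : List Tri) (j : ℕ) :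
    s.count c = (s.take j).count c + (s.drop j).count c := by
  rw [← List.count_append, List.take_append_drop]

lemma motzkin_append (a b : List Tri) :
    IsMotzkin (a ++ b) ↔ VP a ∧ VS b ∧
      a.count Tri.left + b.count Tri.left = a.count Tri.right + b.count Tri.right := by
  constructor
  · rintro ⟨h1, h2⟩
    simp only [List.count_append] at h2
    refine ⟨?_, ?_, h2⟩
    · intro j
      have := h1 (min j a.length)
      rwa [List.take_append, Nat.sub_eq_zero_of_le (min_le_right _ _),
        List.take_zero, List.append_nil, ← List.take_take, List.take_length] at this
    · intro j
      have := h1 (a.length + j)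
      rw [List.take_append, List.take_of_length_le (by omega),
        Nat.add_sub_cancel_left, List.count_append, List.count_append] at this
      have sL := cnt_split Tri.left b j
      have sR := cnt_split Tri.right b j
      omega
  · rintro ⟨hvp, hvs, hbal⟩
    constructor
    · intro j
      rw [List.take_append, List.count_append, List.count_append]
      by_cases hj : j ≤ a.length
      · rw [Nat.sub_eq_zero_of_le hj, List.take_zero]
        simpa using hvp j
      · rw [List.take_of_length_le (by omega)]
        have := hvs (j - a.length)
        have sL := cnt_split Tri.left b (j - a.length)
        have sR := cnt_split Tri.right b (j - a.length)
        omega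
    · simp only [List.count_append]; omega

lemma vp_count {s : List Tri} (h : VP s) : s.count Tri.right ≤ s.count Tri.left := by
  have := h s.length; rwa [List.take_length] at this

lemma vs_count {s : List Tri} (h : VS s) : s.count Tri.left ≤ s.count Tri.right := by
  have := h 0; simpa using this

/-- row test vector -/
def uFun (h : ℕ) (e : ℕ) : Fin h → Tri := fun i => if (i : ℕ) < e then Tri.left else Tri.zero

def vFun (h : ℕ) (e : ℕ) : Fin h → Tri := fun i => if (i : ℕ) < h - e then Tri.zero else Tri.right

lemma ofFn_uFun (h e : ℕ) (he : e ≤ h) :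
    List.ofFn (uFun h e) = List.replicate e Tri.left ++ List.replicate (h - e) Tri.zero := by
  apply List.ext_getElem
  · simp; omega
  · intro i h1 h2
    simp only [List.getElem_ofFn, uFun]
    by_cases hi : i < e
    · rw [List.getElem_append_left (by simpa using hi)]
      simp [hi]
    · rw [List.getElem_append_right (by simpa using hi)]
      simp [hi]

lemma ofFn_vFun (h e : ℕ) (he : e ≤ h) :
    List.ofFn (vFun h e) = List.replicate (h - e) Tri.zero ++ List.replicate e Tri.right := by
  apply List.ext_getElem
  · simp; omega
  · intro i h1 h2
    simp only [List.getElem_ofFn, vFun]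
    by_cases hi : i < h - e
    · rw [List.getElem_append_left (by simpa using hi)]
      simp [hi]
    · rw [List.getElem_append_right (by simpa using hi)]
      simp [hi]

lemma count_uFun_left (h e : ℕ) (he : e ≤ h) :
    (List.ofFn (uFun h e)).count Tri.left = e := by
  rw [ofFn_uFun h e he, List.count_append, List.count_replicate, List.count_replicate]
  simp

lemma count_uFun_right (h e : ℕ) (he : e ≤ h) :
    (List.ofFn (uFun h e)).count Tri.right = 0 := by
  rw [ofFn_uFun h e he, List.count_append, List.count_replicate, List.count_replicate]
  simp

lemma count_vFun_left (h e : ℕ) (he : e ≤ h) :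
    (List.ofFn (vFun h e)).count Tri.left = 0 := by
  rw [ofFn_vFun h e he, List.count_append, List.count_replicate, List.count_replicate]
  simp

lemma count_vFun_right (h e : ℕ) (he : e ≤ h) :
    (List.ofFn (vFun h e)).count Tri.right = e := by
  rw [ofFn_vFun h e he, List.count_append, List.count_replicate, List.count_replicate]
  simp

lemma vp_uFun (h e : ℕ) (he : e ≤ h) : VP (List.ofFn (uFun h e)) := by
  intro j
  have : (List.take j (List.ofFn (uFun h e))).count Tri.right ≤
      (List.ofFn (uFun h e)).count Tri.right :=
    (List.take_sublist _ _).count_le _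
  rw [count_uFun_right h e he] at this
  omega

lemma vs_vFun (h e : ℕ) (he : e ≤ h) : VS (List.ofFn (vFun h e)) := by
  intro j
  have : (List.drop j (List.ofFn (vFun h e))).count Tri.left ≤
      (List.ofFn (vFun h e)).count Tri.left :=
    (List.drop_sublist _ _).count_le _
  rw [count_vFun_left h e he] at this
  omega


attribute [local instance] Classical.propDecidable

/-- The matrix `M` over `ℚ` whose rows and columns are indexed by strings of length
`h` (encoded as functions `Fin h → Σ`), with `M(u, v) = 1` if the concatenation
`u·v` is a Motzkin path and `M(u, v) = 0` otherwise. -/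
noncomputable def motzMat (h : ℕ) : Matrix (Fin h → Tri) (Fin h → Tri) ℚ :=
  fun u v => if IsMotzkin (List.ofFn u ++ List.ofFn v) then 1 else 0

/-- For `n = 2h` even, the rank of `M` equals `h + 1 = 1 + n/2`: the Schmidt rank of
the Motzkin state across the middle cut. -/
noncomputable def Pmat (h : ℕ) : Matrix (Fin h → Tri) (Fin (h + 1)) ℚ :=
  fun u e => if VP (List.ofFn u) ∧
    (List.ofFn u).count Tri.left = (List.ofFn u).count Tri.right + (e : ℕ) then 1 else 0

noncomputable def Qmat (h : ℕ) : Matrix (Fin (h + 1)) (Fin h → Tri) ℚ :=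
  fun e v => if VS (List.ofFn v) ∧
    (List.ofFn v).count Tri.right = (List.ofFn v).count Tri.left + (e : ℕ) then 1 else 0

lemma factor (h : ℕ) : motzMat h = Pmat h * Qmat h := by
  funext u v
  rw [Matrix.mul_apply]
  simp only [motzMat, Pmat, Qmat]
  by_cases hm : IsMotzkin (List.ofFn u ++ List.ofFn v)
  · obtain ⟨hvp, hvs, hbal⟩ := (motzkin_append _ _).1 hm
    have hru : (List.ofFn u).count Tri.right ≤ (List.ofFn u).count Tri.left := vp_count hvp
    have hlu : (List.ofFn u).count Tri.left ≤ h := by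
      have : (List.ofFn u).count Tri.left ≤ (List.ofFn u).length := List.count_le_length
      simpa using this
    set e₀ : ℕ := (List.ofFn u).count Tri.left - (List.ofFn u).count Tri.right with he₀
    rw [if_pos hm]
    rw [Finset.sum_eq_single (⟨e₀, by omega⟩ : Fin (h + 1))]
    · rw [if_pos ⟨hvp, by simp only [Fin.val_mk]; omega⟩,
          if_pos ⟨hvs, by simp only [Fin.val_mk]; omega⟩]
      norm_num
    · intro e _ hne
      by_cases h1 : VP (List.ofFn u) ∧
          (List.ofFn u).count Tri.left = (List.ofFn u).count Tri.right + (e : ℕ)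
      · rw [if_neg]
        · simp
        · rintro ⟨-, hc⟩
          refine hne (Fin.ext ?_)
          simp only [Fin.val_mk]
          omega
      · rw [if_neg h1, zero_mul]
    · intro habs
      exact absurd (Finset.mem_univ _) habs
  · rw [if_neg hm]
    refine (Finset.sum_eq_zero ?_).symm
    intro e _
    by_cases h1 : VP (List.ofFn u) ∧
        (List.ofFn u).count Tri.left = (List.ofFn u).count Tri.right + (e : ℕ)
    · by_cases h2 : VS (List.ofFn v) ∧
          (List.ofFn v).count Tri.right = (List.ofFn v).count Tri.left + (e : ℕ)
      · exact absurd ((motzkin_append _ _).2 ⟨h1.1, h2.1, by omega⟩) hm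
      · rw [if_neg h2, mul_zero]
    · rw [if_neg h1, zero_mul]

theorem stmt8 (h : ℕ) (hh : 1 ≤ h) : (motzMat h).rank = h + 1 := by
  apply le_antisymm
  · calc (motzMat h).rank = (Pmat h * Qmat h).rank := by rw [factor]
      _ ≤ (Pmat h).rank := Matrix.rank_mul_le_left _ _
      _ ≤ Fintype.card (Fin (h + 1)) := Matrix.rank_le_card_width _
      _ = h + 1 := by simp
  · set Rm : Matrix (Fin (h + 1)) (Fin h → Tri) ℚ :=
      fun e u => if u = uFun h (e : ℕ) then 1 else 0 with hRm
    set Cm : Matrix (Fin h → Tri) (Fin (h + 1)) ℚ :=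
      fun v e => if v = vFun h (e : ℕ) then 1 else 0 with hCm
    have key : Rm * motzMat h * Cm = 1 := by
      funext e e'
      rw [Matrix.mul_apply]
      have step1 : ∀ v, (Rm * motzMat h) e v = motzMat h (uFun h (e : ℕ)) v := by
        intro v
        rw [Matrix.mul_apply]
        simp only [hRm, ite_mul, one_mul, zero_mul]
        rw [Finset.sum_ite_eq' (Finset.univ) (uFun h (e : ℕ))]
        simp
      simp only [step1, hCm, mul_ite, mul_one, mul_zero]
      rw [Finset.sum_ite_eq' (Finset.univ) (vFun h (e' : ℕ))]
      simp only [Finset.mem_univ, if_true]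
      have he : (e : ℕ) ≤ h := by omega
      have he' : (e' : ℕ) ≤ h := by omega
      rw [motzMat]
      by_cases hee : e = e'
      · subst hee
        rw [if_pos, Matrix.one_apply_eq]
        exact (motzkin_append _ _).2 ⟨vp_uFun h _ he, vs_vFun h _ he,
          by rw [count_uFun_left h _ he, count_uFun_right h _ he,
                 count_vFun_left h _ he, count_vFun_right h _ he]; omega⟩
      · rw [if_neg, Matrix.one_apply_ne hee]
        intro hmo
        obtain ⟨-, -, hbal⟩ := (motzkin_append _ _).1 hmo
        rw [count_uFun_left h _ he, count_uFun_right h _ he,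
            count_vFun_left h _ he', count_vFun_right h _ he'] at hbal
        exact hee (Fin.ext (by omega))
    calc (h : ℕ) + 1 = Fintype.card (Fin (h + 1)) := by simp
      _ = (1 : Matrix (Fin (h + 1)) (Fin (h + 1)) ℚ).rank := Matrix.rank_one.symm
      _ = (Rm * motzMat h * Cm).rank := by rw [key]
      _ ≤ (Rm * motzMat h).rank := Matrix.rank_mul_le_left _ _
      _ ≤ (motzMat h).rank := Matrix.rank_mul_le_right _ _
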